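/- arXiv:1611.02584 — 5 statements merged into one kernel-verified Lean document; each statement's English description precedes it below -/
import Mathlib

section
/- Let S be an n-dimensional simplex in ℝⁿ (the convex hull of n+1 affinely independent points a₀, …, aₙ) and Y a real vector space. Every convex multifunction F : S → Set Y with nonempty values admits an affine selection, i.e., there exists an affine map f : ℝⁿ → Y with f(x) ∈ F(x) for all x ∈ S. -/
/-!
Over the simplex `S`, convexity of `F` says exactly that its graph `{(x, y) | x ∈ S, y ∈ F x}` is a
convex set. Pick `yᵢ ∈ F aᵢ` and let `f` be the affine map with `f aᵢ = yᵢ`. The affine map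
`x ↦ (x, f x)` sends `S = convexHull {aᵢ}` onto the convex hull of the points `(aᵢ, yᵢ)`, which
lie in the graph of `F`; hence so does `(x, f x)` for every `x ∈ S`.
-/

open Pointwise

def IsConvexMultifunction (𝕜 : Type*) {E Y : Type*} [Ring 𝕜] [PartialOrder 𝕜] [AddCommGroup E]
    [Module 𝕜 E] [AddCommGroup Y] [Module 𝕜 Y] (s : Set E) (F : E → Set Y) : Prop :=
  ∀ x ∈ s, ∀ y ∈ s, ∀ t ∈ Set.Icc (0 : 𝕜) 1, t • F x + (1 - t) • F y ⊆ F (t • x + (1 - t) • y)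

namespace IsConvexMultifunction

variable {𝕜 E Y : Type*} [Field 𝕜] [LinearOrder 𝕜] [IsStrictOrderedRing 𝕜]
  [AddCommGroup E] [Module 𝕜 E] [AddCommGroup Y] [Module 𝕜 Y] {s : Set E} {F : E → Set Y}

theorem convex_graph (hF : IsConvexMultifunction 𝕜 s F) (hs : Convex 𝕜 s) :
    Convex 𝕜 {p : E × Y | p.1 ∈ s ∧ p.2 ∈ F p.1} := by
  rintro ⟨x, u⟩ ⟨hx, hu⟩ ⟨y, v⟩ ⟨hy, hv⟩ t r ht hr htr
  obtain rfl : r = 1 - t := by linarith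
  exact ⟨hs hx hy ht hr htr, hF x hx y hy t ⟨ht, by linarith⟩
    (Set.add_mem_add (Set.smul_mem_smul_set hu) (Set.smul_mem_smul_set hv))⟩

theorem apply_mem_of_affineMap {P : Set E} (hF : IsConvexMultifunction 𝕜 (convexHull 𝕜 P) F)
    (f : E →ᵃ[𝕜] Y) (hfP : ∀ p ∈ P, f p ∈ F p) {x : E} (hx : x ∈ convexHull 𝕜 P) :
    f x ∈ F x := by
  let g := (AffineMap.id 𝕜 E).prod f
  have hgP : g '' P ⊆ {p : E × Y | p.1 ∈ convexHull 𝕜 P ∧ p.2 ∈ F p.1} := by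
    rintro _ ⟨p, hp, rfl⟩
    exact ⟨subset_convexHull 𝕜 P hp, hfP p hp⟩
  have hgx : g x ∈ convexHull 𝕜 (g '' P) := g.image_convexHull P ▸ Set.mem_image_of_mem g hx
  exact (convexHull_min hgP (hF.convex_graph (convex_convexHull 𝕜 P)) hgx).2

end IsConvexMultifunction

theorem AffineBasis.exists_affineMap_apply_eq {ι k V P Y : Type*} [Fintype ι] [Ring k]
    [AddCommGroup V] [Module k V] [AddTorsor V P] [AddCommGroup Y] [Module k Y]
    (b : AffineBasis ι k P) (y : ι → Y) : ∃ f : P →ᵃ[k] Y, ∀ i, f (b i) = y i := by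
  classical
  refine ⟨(Fintype.linearCombination k y).toAffineMap.comp b.coords, fun i => ?_⟩
  simp [b.coords_apply, b.coord_apply, Fintype.linearCombination_apply]

theorem stmt_3 {n : ℕ} {Y : Type*} [AddCommGroup Y] [Module ℝ Y]
    (a : Fin (n + 1) → (Fin n → ℝ)) (ha : AffineIndependent ℝ a)
    (F : (Fin n → ℝ) → Set Y)
    (hne : ∀ x ∈ convexHull ℝ (Set.range a), (F x).Nonempty)
    (hF : ∀ x ∈ convexHull ℝ (Set.range a), ∀ y ∈ convexHull ℝ (Set.range a),
        ∀ t ∈ Set.Icc (0:ℝ) 1,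
        t • F x + (1 - t) • F y ⊆ F (t • x + (1 - t) • y)) :
    ∃ f : (Fin n → ℝ) →ᵃ[ℝ] Y, ∀ x ∈ convexHull ℝ (Set.range a), f x ∈ F x := by
  have hspan : affineSpan ℝ (Set.range a) = ⊤ := by
    rw [ha.affineSpan_eq_top_iff_card_eq_finrank_add_one]
    simp
  choose y hy using fun i => hne (a i) (subset_convexHull ℝ _ (Set.mem_range_self i))
  obtain ⟨f, hf⟩ := (AffineBasis.mk a ha hspan).exists_affineMap_apply_eq y
  refine ⟨f, fun x hx => IsConvexMultifunction.apply_mem_of_affineMap hF f ?_ hx⟩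
  rintro _ ⟨i, rfl⟩
  exact (hf i).symm ▸ hy i
end

section
/- Let D ⊆ ℝⁿ be a convex set with nonempty interior and Y a real vector space. Every convex multifunction F : D → Set Y with nonempty values admits a local affine selection at every interior point of D: for every x₀ in the interior of D there exist an open neighbourhood U ⊆ D of x₀ and an affine map f : ℝⁿ → Y such that f(x) ∈ F(x) for all x ∈ U. -/
open Pointwise

theorem auxsum {E Y : Type*} [AddCommGroup E] [Module ℝ E] [AddCommGroup Y] [Module ℝ Y]
    (D : Set E) (hD : Convex ℝ D) (F : E → Set Y)
    (hF : ∀ x ∈ D, ∀ y ∈ D, ∀ t ∈ Set.Icc (0:ℝ) 1,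
        t • F x + (1 - t) • F y ⊆ F (t • x + (1 - t) • y))
    {ι : Type*} (s : Finset ι) :
    ∀ (w : ι → ℝ) (p : ι → E) (z : ι → Y), (∀ i ∈ s, 0 ≤ w i) → (∑ i ∈ s, w i = 1) →
      (∀ i ∈ s, p i ∈ D) → (∀ i ∈ s, z i ∈ F (p i)) →
      ∑ i ∈ s, w i • z i ∈ F (∑ i ∈ s, w i • p i) := by
  classical
  induction s using Finset.induction_on with
  | empty => intro w p z _ h1 _ _; simp at h1
  | @insert a s ha ih =>
    intro w p z hw hw1 hp hz
    rw [Finset.sum_insert ha] at hw1 ⊢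
    rw [Finset.sum_insert ha]
    by_cases ht1 : w a = 1
    · have hs0 : ∑ i ∈ s, w i = 0 := by rw [ht1] at hw1; linarith
      have hz0 : ∀ i ∈ s, w i = 0 := fun i hi =>
        le_antisymm (hs0 ▸ Finset.single_le_sum (fun j hj => hw j (Finset.mem_insert_of_mem hj)) hi)
          (hw i (Finset.mem_insert_of_mem hi))
      have e1 : ∑ i ∈ s, w i • z i = 0 := Finset.sum_eq_zero fun i hi => by rw [hz0 i hi, zero_smul]
      have e2 : ∑ i ∈ s, w i • p i = 0 := Finset.sum_eq_zero fun i hi => by rw [hz0 i hi, zero_smul]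
      rw [e1, e2, add_zero, add_zero, ht1, one_smul, one_smul]
      exact hz a (Finset.mem_insert_self a s)
    · have ht0 : 0 ≤ w a := hw a (Finset.mem_insert_self a s)
      have hsnn : 0 ≤ ∑ i ∈ s, w i :=
        Finset.sum_nonneg fun i hi => hw i (Finset.mem_insert_of_mem hi)
      have htlt : w a < 1 := lt_of_le_of_ne (by linarith) ht1
      have h1t : (0:ℝ) < 1 - w a := by linarith
      set w' := fun i => w i / (1 - w a) with hw'def
      have hw'1 : ∑ i ∈ s, w' i = 1 := by
        rw [← Finset.sum_div]
        field_simp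
        linarith
      have hw'nn : ∀ i ∈ s, 0 ≤ w' i := fun i hi =>
        div_nonneg (hw i (Finset.mem_insert_of_mem hi)) h1t.le
      have key := ih w' p z hw'nn hw'1 (fun i hi => hp i (Finset.mem_insert_of_mem hi))
        (fun i hi => hz i (Finset.mem_insert_of_mem hi))
      have hq : ∑ i ∈ s, w' i • p i ∈ D :=
        hD.sum_mem hw'nn hw'1 (fun i hi => hp i (Finset.mem_insert_of_mem hi))
      have hmem := hF (p a) (hp a (Finset.mem_insert_self a s)) _ hq (w a)
        ⟨ht0, htlt.le⟩ (Set.add_mem_add (Set.smul_mem_smul_set (hz a (Finset.mem_insert_self a s)))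
          (Set.smul_mem_smul_set key))
      have escalez : (1 - w a) • ∑ i ∈ s, w' i • z i = ∑ i ∈ s, w i • z i := by
        rw [Finset.smul_sum]
        refine Finset.sum_congr rfl fun i hi => ?_
        rw [smul_smul, hw'def]
        congr 1
        field_simp
      have escalep : (1 - w a) • ∑ i ∈ s, w' i • p i = ∑ i ∈ s, w i • p i := by
        rw [Finset.smul_sum]
        refine Finset.sum_congr rfl fun i hi => ?_
        rw [smul_smul, hw'def]
        congr 1
        field_simp
      rw [← escalez, ← escalep]
      exact hmem

theorem affine_sum_apply {k V P W : Type*} [Ring k] [AddCommGroup V] [Module k V]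
    [AddTorsor V P] [AddCommGroup W] [Module k W]
    {ι : Type*} (s : Finset ι) (g : ι → (P →ᵃ[k] W)) (y : P) :
    (∑ i ∈ s, g i) y = ∑ i ∈ s, g i y := by
  classical
  induction s using Finset.induction_on with
  | empty => simp
  | @insert a s ha ih => simp [Finset.sum_insert ha, ih]

noncomputable def Acoord {n : ℕ} (j : Fin n) : (Fin n → ℝ) →ᵃ[ℝ] ℝ :=
  (LinearMap.proj j).toAffineMap

noncomputable def Tmap {n : ℕ} (δ q : ℝ) (x₀ : Fin n → ℝ) (i : Fin (n+1)) :
    (Fin n → ℝ) →ᵃ[ℝ] ℝ :=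
  if h : (i:ℕ) < n then
    δ⁻¹ • (Acoord ⟨i,h⟩ - AffineMap.const ℝ _ (x₀ ⟨i,h⟩)) + AffineMap.const ℝ _ q
  else AffineMap.const ℝ _ 1
    - ∑ j : Fin n, (δ⁻¹ • (Acoord j - AffineMap.const ℝ _ (x₀ j)) + AffineMap.const ℝ _ q)

theorem Tmap_apply {n : ℕ} (δ q : ℝ) (x₀ : Fin n → ℝ) (i : Fin (n+1)) (y : Fin n → ℝ) :
    Tmap δ q x₀ i y = if h : (i:ℕ) < n then δ⁻¹ * (y ⟨i,h⟩ - x₀ ⟨i,h⟩) + q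
      else 1 - ∑ j : Fin n, (δ⁻¹ * (y j - x₀ j) + q) := by
  by_cases h : (i:ℕ) < n
  · simp [Tmap, h, Acoord]
  · simp [Tmap, h, Acoord, affine_sum_apply]

theorem Tmap_castSucc {n : ℕ} (δ q : ℝ) (x₀ : Fin n → ℝ) (j : Fin n) (y : Fin n → ℝ) :
    Tmap δ q x₀ (Fin.castSucc j) y = δ⁻¹ * (y j - x₀ j) + q := by
  rcases j with ⟨j, hj⟩
  rw [Tmap_apply]
  simp only [Fin.coe_castSucc]
  rw [dif_pos hj]

theorem Tmap_last {n : ℕ} (δ q : ℝ) (x₀ : Fin n → ℝ) (y : Fin n → ℝ) :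
    Tmap δ q x₀ (Fin.last n) y = 1 - ∑ j : Fin n, (δ⁻¹ * (y j - x₀ j) + q) := by
  rw [Tmap_apply, dif_neg]
  simp

theorem stmt_5 {n : ℕ} {Y : Type*} [AddCommGroup Y] [Module ℝ Y]
    (D : Set (Fin n → ℝ)) (hD : Convex ℝ D) (hint : (interior D).Nonempty)
    (F : (Fin n → ℝ) → Set Y) (hne : ∀ x ∈ D, (F x).Nonempty)
    (hF : ∀ x ∈ D, ∀ y ∈ D, ∀ t ∈ Set.Icc (0:ℝ) 1,
        t • F x + (1 - t) • F y ⊆ F (t • x + (1 - t) • y)) :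
    ∀ x₀ ∈ interior D, ∃ U : Set (Fin n → ℝ), IsOpen U ∧ x₀ ∈ U ∧ U ⊆ D ∧
      ∃ f : (Fin n → ℝ) →ᵃ[ℝ] Y, ∀ x ∈ U, f x ∈ F x := by
  classical
  intro x₀ hx₀
  obtain ⟨ε, hε, hball⟩ := Metric.isOpen_iff.mp isOpen_interior x₀ hx₀
  set δ : ℝ := ε/2 with hδdef
  have hδ : 0 < δ := by positivity
  set q : ℝ := 1/(n+1) with hqdef
  have hq0 : 0 < q := by positivity
  have hq1 : q ≤ 1 := by
    rw [hqdef, div_le_one (by positivity)]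
    norm_num
  set u : Fin (n+1) → (Fin n → ℝ) := fun i =>
    if h : (i:ℕ) < n then Pi.single (⟨i, h⟩ : Fin n) 1 else 0 with hudef
  set v : Fin (n+1) → (Fin n → ℝ) := fun i => x₀ + δ • (u i - fun _ => q) with hvdef
  have hu01 : ∀ i k, 0 ≤ u i k ∧ u i k ≤ 1 := by
    intro i k
    by_cases h : (i:ℕ) < n
    · simp only [hudef, dif_pos h, Pi.single_apply]
      split_ifs <;> norm_num
    · simp only [hudef, dif_neg h, Pi.zero_apply]
      norm_num
  -- vertices are in interior D
  have hvmem : ∀ i, v i ∈ interior D := by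
    intro i
    apply hball
    rw [Metric.mem_ball, dist_eq_norm]
    have : v i - x₀ = δ • (u i - fun _ => q) := by
      show x₀ + δ • (u i - fun _ => q) - x₀ = _
      rw [add_sub_cancel_left]
    rw [this]
    have hb : ‖δ • (u i - fun _ => q)‖ ≤ δ := by
      apply pi_norm_le_iff_of_nonneg hδ.le |>.mpr
      intro k
      have h1 := (hu01 i k).1
      have h2 := (hu01 i k).2
      simp only [Pi.smul_apply, Pi.sub_apply, smul_eq_mul, Real.norm_eq_abs, abs_mul,
        abs_of_pos hδ]
      have : |u i k - q| ≤ 1 := by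
        rw [abs_le]
        constructor <;> linarith
      nlinarith
    calc ‖δ • (u i - fun _ => q)‖ ≤ δ := hb
      _ < ε := by rw [hδdef]; linarith
  have hvD : ∀ i, v i ∈ D := fun i => interior_subset (hvmem i)
  -- sum of barycentric coordinates is 1
  have hTsum : ∀ y, ∑ i : Fin (n+1), Tmap δ q x₀ i y = 1 := by
    intro y
    rw [Fin.sum_univ_castSucc]
    simp only [Tmap_castSucc, Tmap_last]
    ring
  -- the combination reproduces y
  have hTcomb : ∀ y, ∑ i : Fin (n+1), Tmap δ q x₀ i y • v i = y := by
    intro y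
    funext k
    rw [Finset.sum_apply]
    simp only [Pi.smul_apply, smul_eq_mul]
    rw [Fin.sum_univ_castSucc]
    have hvc : ∀ j : Fin n, v (Fin.castSucc j) k
        = x₀ k + δ * ((if k = j then 1 else 0) - q) := by
      intro j
      rcases j with ⟨j, hj⟩
      show x₀ k + (δ • (u (Fin.castSucc ⟨j, hj⟩) - fun _ : Fin n => q) : Fin n → ℝ) k = _
      simp only [hudef, Fin.coe_castSucc, dif_pos hj, Pi.smul_apply, Pi.sub_apply,
        smul_eq_mul, Pi.single_apply]
    have hvl : v (Fin.last n) k = x₀ k + δ * (0 - q) := by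
      rw [hvdef]
      simp [hudef]
    rw [hvl, Tmap_last]
    have step : ∀ j : Fin n, Tmap δ q x₀ (Fin.castSucc j) y * v (Fin.castSucc j) k
        = (δ⁻¹ * (y j - x₀ j) + q) * (x₀ k - δ * q)
          + δ * ((δ⁻¹ * (y j - x₀ j) + q) * (if k = j then 1 else 0)) := by
      intro j
      rw [Tmap_castSucc, hvc]
      ring
    rw [Finset.sum_congr rfl fun j _ => step j, Finset.sum_add_distrib,
      ← Finset.sum_mul, ← Finset.mul_sum]
    have hite : ∑ j : Fin n, (δ⁻¹ * (y j - x₀ j) + q) * (if k = j then 1 else 0)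
        = δ⁻¹ * (y k - x₀ k) + q := by
      rw [Finset.sum_congr rfl (fun j _ => by rw [mul_ite, mul_one, mul_zero])]
      rw [Finset.sum_ite_eq]
      simp
    rw [hite]
    set S := ∑ j : Fin n, (δ⁻¹ * (y j - x₀ j) + q) with hS
    field_simp
    ring
  -- positivity at x₀
  have hTx₀ : ∀ i, 0 < Tmap δ q x₀ i x₀ := by
    intro i
    rw [Tmap_apply]
    split
    · simpa using hq0
    · simp only [sub_self, mul_zero, zero_add]
      rw [Finset.sum_const, Finset.card_univ, Fintype.card_fin, nsmul_eq_mul]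
      rw [hqdef]
      rw [sub_pos]
      rw [mul_one_div, div_lt_one (by positivity)]
      norm_num
  -- the open set
  set U : Set (Fin n → ℝ) := {y | ∀ i, 0 < Tmap δ q x₀ i y} with hUdef
  have hUopen : IsOpen U := by
    have : U = ⋂ i : Fin (n+1), (Tmap δ q x₀ i) ⁻¹' Set.Ioi 0 := by
      ext y; simp [hUdef, Set.mem_iInter]
    rw [this]
    exact isOpen_iInter_of_finite fun i =>
      isOpen_Ioi.preimage (Tmap δ q x₀ i).continuous_of_finiteDimensional
  have hUsub : U ⊆ D := by
    intro y hy
    have := hD.sum_mem (fun i _ => (hy i).le) (hTsum y) (fun i _ => hvD i)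
    rwa [hTcomb y] at this
  -- choose points in the fibers
  have hzex : ∀ i : Fin (n+1), ∃ z, z ∈ F (v i) := fun i => hne (v i) (hvD i)
  choose z hz using hzex
  -- the affine selection
  refine ⟨U, hUopen, hTx₀, hUsub, ?_⟩
  refine ⟨{ toFun := fun y => ∑ i : Fin (n+1), Tmap δ q x₀ i y • z i
            linear := ∑ i : Fin (n+1), ((Tmap δ q x₀ i).linear.smulRight (z i))
            map_vadd' := ?_ }, ?_⟩
  · intro p w
    simp only [LinearMap.sum_apply, LinearMap.smulRight_apply]
    have : ∀ i : Fin (n+1), Tmap δ q x₀ i (w +ᵥ p)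
        = (Tmap δ q x₀ i).linear w + Tmap δ q x₀ i p := by
      intro i
      rw [AffineMap.map_vadd]
      rfl
    simp only [this, add_smul, Finset.sum_add_distrib]
    rfl
  · intro x hx
    have key := auxsum D hD F hF Finset.univ (fun i => Tmap δ q x₀ i x) v z
      (fun i _ => (hx i).le) (hTsum x) (fun i _ => hvD i) (fun i _ => hz i)
    rw [hTcomb x] at key
    exact key
end

section
/- Let X be a closed linear subspace of a real Banach space Y, and suppose X* does not embed linearly isometrically into Y*. Define F(f) = {g ∈ Y* : g|_X = f and ‖g‖ = ‖f‖} for f ∈ X*. Then F admits no local affine selection at 0: there is no open neighbourhood U of 0 in X* and affine map φ : X* → Y* with φ(f) ∈ F(f) for all f ∈ U. -/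
open NormedSpace

open Filter Topology

theorem AffineMap.linear_apply_of_map_zero {k V₁ V₂ : Type*} [Ring k] [AddCommGroup V₁]
    [Module k V₁] [AddCommGroup V₂] [Module k V₂] (φ : V₁ →ᵃ[k] V₂) (h : φ 0 = 0) (v : V₁) :
    φ.linear v = φ v := by
  simpa [h] using congrFun φ.decomp' v

theorem LinearMap.norm_map_of_eventually_nhds_zero {𝕜 E F : Type*} [NontriviallyNormedField 𝕜]
    [SeminormedAddCommGroup E] [NormedSpace 𝕜 E] [SeminormedAddCommGroup F] [NormedSpace 𝕜 F]
    (T : E →ₗ[𝕜] F) (hT : ∀ᶠ x in 𝓝 0, ‖T x‖ = ‖x‖) (x : E) : ‖T x‖ = ‖x‖ := by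
  have hsmul : Tendsto (fun c : 𝕜 => c • x) (𝓝[≠] 0) (𝓝 0) := by
    simpa using ((tendsto_id (x := 𝓝 (0 : 𝕜))).smul_const x).mono_left nhdsWithin_le_nhds
  obtain ⟨c, hcx, hc⟩ := ((hsmul.eventually hT).and self_mem_nhdsWithin).exists
  rw [map_smul, norm_smul, norm_smul] at hcx
  exact mul_left_cancel₀ (norm_ne_zero_iff.2 hc) hcx

theorem stmt_11_general {Y : Type*} [NormedAddCommGroup Y] [NormedSpace ℝ Y]
    (X : Subspace ℝ Y)
    (hemb : ¬ ∃ T : StrongDual ℝ X →ₗ[ℝ] StrongDual ℝ Y, ∀ f, ‖T f‖ = ‖f‖)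
    (F : StrongDual ℝ X → Set (StrongDual ℝ Y))
    (hF : ∀ f, F f = {g : StrongDual ℝ Y | (∀ x : X, g x = f x) ∧ ‖g‖ = ‖f‖}) :
    ¬ ∃ (U : Set (StrongDual ℝ X)) (φ : StrongDual ℝ X →ᵃ[ℝ] StrongDual ℝ Y),
        IsOpen U ∧ (0 : StrongDual ℝ X) ∈ U ∧ ∀ f ∈ U, φ f ∈ F f := by
  rintro ⟨U, φ, hU, h0, hsel⟩
  have hnorm : ∀ f ∈ U, ‖φ f‖ = ‖f‖ := fun f hf => by
    have hf' := hsel f hf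
    rw [hF] at hf'
    exact hf'.2
  have hφ0 : φ 0 = 0 := norm_eq_zero.1 ((hnorm 0 h0).trans (norm_zero (E := StrongDual ℝ X)))
  refine hemb ⟨φ.linear, fun f => ?_⟩
  refine φ.linear.norm_map_of_eventually_nhds_zero (𝕜 := ℝ) ?_ f
  filter_upwards [hU.mem_nhds h0] with f hf
  rw [φ.linear_apply_of_map_zero hφ0, hnorm f hf]

theorem stmt_11 {Y : Type*} [NormedAddCommGroup Y] [NormedSpace ℝ Y]
    [CompleteSpace Y] (X : Subspace ℝ Y) (hX : IsClosed (X : Set Y))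
    (hemb : ¬ ∃ T : StrongDual ℝ X →ₗ[ℝ] StrongDual ℝ Y, ∀ f, ‖T f‖ = ‖f‖)
    (F : StrongDual ℝ X → Set (StrongDual ℝ Y))
    (hF : ∀ f, F f = {g : StrongDual ℝ Y | (∀ x : X, g x = f x) ∧ ‖g‖ = ‖f‖}) :
    ¬ ∃ (U : Set (StrongDual ℝ X)) (φ : StrongDual ℝ X →ᵃ[ℝ] StrongDual ℝ Y),
        IsOpen U ∧ (0 : StrongDual ℝ X) ∈ U ∧ ∀ f ∈ U, φ f ∈ F f :=
  stmt_11_general X hemb F hF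
end

section
/- The Banach space ℓ∞ (equivalently, the dual of ℓ₁) does not embed linearly isometrically into L₁(μ) for any measure μ. In particular, ℓ∞ does not embed linearly isometrically into the dual of C([0,1]). -/
/-!
Both L₁(μ) and the dual of C(K) satisfy Hlawka's inequality
`‖x + y‖ + ‖y + z‖ + ‖z + x‖ ≤ ‖x + y + z‖ + ‖x‖ + ‖y‖ + ‖z‖`, which passes to subspaces, while
ℓ∞ violates it at `x = (-1, 1, 1, 0, …)`, `y = (1, -1, 1, 0, …)`, `z = (1, 1, -1, 0, …)`, where the
left side is 6 and the right side 4. For L₁ the inequality is integrated from the scalar one. For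
the dual of C(K), test `φ + ψ`, `ψ + χ`, `χ + φ` against almost norming `f, g, h` and regroup
through a `u` in the unit ball with `f + g - u`, `g + h - u`, `h + f - u` also in the unit ball.
-/

open MeasureTheory NormedSpace

def HlawkaInequality (E : Type*) [SeminormedAddCommGroup E] : Prop :=
  ∀ x y z : E, ‖x + y‖ + ‖y + z‖ + ‖z + x‖ ≤ ‖x + y + z‖ + ‖x‖ + ‖y‖ + ‖z‖

theorem hlawkaInequality_real : HlawkaInequality ℝ := by
  intro a b c
  simp only [Real.norm_eq_abs]
  rcases abs_cases (a + b) with ⟨h₁, -⟩ | ⟨h₁, -⟩ <;>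
  rcases abs_cases (b + c) with ⟨h₂, -⟩ | ⟨h₂, -⟩ <;>
  rcases abs_cases (c + a) with ⟨h₃, -⟩ | ⟨h₃, -⟩ <;>
  linarith [le_abs_self (a + b + c), neg_abs_le (a + b + c), le_abs_self a, neg_abs_le a,
    le_abs_self b, neg_abs_le b, le_abs_self c, neg_abs_le c]

theorem HlawkaInequality.of_norm_map {E F 𝓕 : Type*} [SeminormedAddCommGroup E]
    [SeminormedAddCommGroup F] [FunLike 𝓕 E F] [AddMonoidHomClass 𝓕 E F]
    (hF : HlawkaInequality F) (T : 𝓕) (hT : ∀ x, ‖T x‖ = ‖x‖) : HlawkaInequality E := by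
  intro x y z
  simpa only [← map_add, hT] using hF (T x) (T y) (T z)

theorem HlawkaInequality.lp_one {α E : Type*} [MeasurableSpace α] {μ : Measure α}
    [NormedAddCommGroup E] (hE : HlawkaInequality E) : HlawkaInequality (Lp E 1 μ) := by
  intro f g h
  have hf := L1.integrable_coeFn f
  have hg := L1.integrable_coeFn g
  have hh := L1.integrable_coeFn h
  have norm_eq (u : Lp E 1 μ) (v : α → E) (huv : u =ᵐ[μ] v) : ‖u‖ = ∫ a, ‖v a‖ ∂μ := by
    rw [L1.norm_eq_integral_norm]
    exact integral_congr_ae (huv.fun_comp norm)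
  have hfgh : ⇑(f + g + h) =ᵐ[μ] fun a => f a + g a + h a := by
    filter_upwards [Lp.coeFn_add (f + g) h, Lp.coeFn_add f g] with a h₁ h₂
    rw [h₁, Pi.add_apply, h₂, Pi.add_apply]
  rw [norm_eq _ _ (Lp.coeFn_add f g), norm_eq _ _ (Lp.coeFn_add g h),
    norm_eq _ _ (Lp.coeFn_add h f), norm_eq _ _ hfgh, L1.norm_eq_integral_norm f,
    L1.norm_eq_integral_norm g, L1.norm_eq_integral_norm h, ← integral_add, ← integral_add,
    ← integral_add, ← integral_add, ← integral_add]
  · exact integral_mono (by fun_prop) (by fun_prop) fun a => hE (f a) (g a) (h a)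
  all_goals fun_prop

theorem StrongDual.exists_norm_le_one_lt_apply {E : Type*} [NormedAddCommGroup E]
    [NormedSpace ℝ E] (φ : StrongDual ℝ E) {r : ℝ} (hr : r < ‖φ‖) :
    ∃ v, ‖v‖ ≤ 1 ∧ r < φ v := by
  obtain ⟨w, hw, hrw⟩ := φ.exists_lt_apply_of_lt_opNorm hr
  rcases lt_abs.1 hrw with h | h
  · exact ⟨w, hw.le, h⟩
  · exact ⟨-w, by rw [norm_neg]; exact hw.le, by rwa [map_neg]⟩

theorem hlawkaInequality_strongDual {E : Type*} [NormedAddCommGroup E] [NormedSpace ℝ E]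
    (hE : ∀ f g h : E, ‖f‖ ≤ 1 → ‖g‖ ≤ 1 → ‖h‖ ≤ 1 →
      ∃ u : E, ‖u‖ ≤ 1 ∧ ‖f + g - u‖ ≤ 1 ∧ ‖g + h - u‖ ≤ 1 ∧ ‖h + f - u‖ ≤ 1) :
    HlawkaInequality (StrongDual ℝ E) := by
  intro φ ψ χ
  refine le_of_forall_pos_le_add fun ε hε => ?_
  have hε₃ (r : ℝ) : r - ε / 3 < r := sub_lt_self r (by positivity)
  obtain ⟨f, hf, hf'⟩ := (φ + ψ).exists_norm_le_one_lt_apply (hε₃ _)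
  obtain ⟨g, hg, hg'⟩ := (ψ + χ).exists_norm_le_one_lt_apply (hε₃ _)
  obtain ⟨h, hh, hh'⟩ := (χ + φ).exists_norm_le_one_lt_apply (hε₃ _)
  obtain ⟨u, hu, hfg, hgh, hhf⟩ := hE f g h hf hg hh
  have apply_le (ξ : StrongDual ℝ E) {v : E} (hv : ‖v‖ ≤ 1) : ξ v ≤ ‖ξ‖ :=
    (le_abs_self _).trans (ξ.unit_le_opNorm v hv)
  have regroup : (φ + ψ) f + (ψ + χ) g + (χ + φ) h =
      (φ + ψ + χ) u + φ (h + f - u) + ψ (f + g - u) + χ (g + h - u) := by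
    simp only [add_apply, map_sub, map_add]
    ring
  linarith [apply_le (φ + ψ + χ) hu, apply_le φ hhf, apply_le ψ hfg, apply_le χ hgh]

/-- The four balls of radius 1 around `0`, `f + g`, `g + h`, `h + f` meet pairwise, and in `C(K, ℝ)`
the pointwise maximum of their centres, minus 1, is a common point. -/
theorem ContinuousMap.exists_norm_le_one_norm_add_sub_le_one {K : Type*} [TopologicalSpace K]
    [CompactSpace K] {f g h : C(K, ℝ)} (hf : ‖f‖ ≤ 1) (hg : ‖g‖ ≤ 1) (hh : ‖h‖ ≤ 1) :
    ∃ u : C(K, ℝ), ‖u‖ ≤ 1 ∧ ‖f + g - u‖ ≤ 1 ∧ ‖g + h - u‖ ≤ 1 ∧ ‖h + f - u‖ ≤ 1 := by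
  refine ⟨(f + g) ⊔ (g + h) ⊔ (h + f) ⊔ 0 - 1, ?_⟩
  simp only [ContinuousMap.norm_le _ zero_le_one, Real.norm_eq_abs, abs_le] at hf hg hh ⊢
  refine ⟨fun x => ?_, fun x => ?_, fun x => ?_, fun x => ?_⟩ <;>
  · simp only [ContinuousMap.sub_apply, ContinuousMap.add_apply, ContinuousMap.sup_apply,
      ContinuousMap.zero_apply, ContinuousMap.one_apply]
    grind [hf x, hg x, hh x]

def flipSign (k : ℕ) : lp (fun _ : ℕ => ℝ) ⊤ :=
  ⟨fun n => if n = k then -1 else if n < 3 then 1 else 0,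
    memℓp_infty ⟨1, by rintro _ ⟨n, rfl⟩; dsimp only; split_ifs <;> norm_num⟩⟩

@[simp]
theorem flipSign_apply (k n : ℕ) :
    flipSign k n = if n = k then -1 else if n < 3 then 1 else 0 :=
  rfl

theorem not_hlawkaInequality_lp_top : ¬ HlawkaInequality (lp (fun _ : ℕ => ℝ) ⊤) := by
  intro hlawka
  have norm_le (k : ℕ) : ‖flipSign k‖ ≤ 1 :=
    lp.norm_le_of_forall_le zero_le_one fun n => by rw [flipSign_apply]; split_ifs <;> norm_num
  have norm_sum_le : ‖flipSign 0 + flipSign 1 + flipSign 2‖ ≤ 1 :=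
    lp.norm_le_of_forall_le zero_le_one fun n => by
      simp only [lp.coeFn_add, Pi.add_apply, flipSign_apply]
      split_ifs <;> first | omega | norm_num
  have le_norm_add (i j k : ℕ) (hk : k < 3) (hki : k ≠ i) (hkj : k ≠ j) :
      2 ≤ ‖flipSign i + flipSign j‖ := by
    refine le_trans (le_of_eq ?_) (lp.norm_apply_le_norm ENNReal.top_ne_zero _ k)
    norm_num [hk, hki, hkj]
  linarith [hlawka (flipSign 0) (flipSign 1) (flipSign 2), norm_le 0, norm_le 1, norm_le 2,
    le_norm_add 0 1 2 (by norm_num) (by norm_num) (by norm_num),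
    le_norm_add 1 2 0 (by norm_num) (by norm_num) (by norm_num),
    le_norm_add 2 0 1 (by norm_num) (by norm_num) (by norm_num)]

theorem HlawkaInequality.not_exists_linearMap_lp_top {F : Type*} [SeminormedAddCommGroup F]
    [Module ℝ F] (hF : HlawkaInequality F) :
    ¬ ∃ T : lp (fun _ : ℕ => ℝ) ⊤ →ₗ[ℝ] F, ∀ f, ‖T f‖ = ‖f‖ :=
  fun ⟨T, hT⟩ => not_hlawkaInequality_lp_top (hF.of_norm_map T hT)

theorem stmt_14 :
    (∀ (α : Type) [MeasurableSpace α] (μ : Measure α),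
      ¬ ∃ T : lp (fun _ : ℕ => ℝ) ⊤ →ₗ[ℝ] Lp ℝ 1 μ, ∀ f, ‖T f‖ = ‖f‖) ∧
    ¬ ∃ T : lp (fun _ : ℕ => ℝ) ⊤ →ₗ[ℝ] StrongDual ℝ C(Set.Icc (0:ℝ) 1, ℝ),
        ∀ f, ‖T f‖ = ‖f‖ :=
  ⟨fun _ _ _ => hlawkaInequality_real.lp_one.not_exists_linearMap_lp_top,
    (hlawkaInequality_strongDual fun _ _ _ =>
      ContinuousMap.exists_norm_le_one_norm_add_sub_le_one).not_exists_linearMap_lp_top⟩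
end

section
/- Let S ⊆ ℝ³ be the simplex with vertices (-1,0,0), (1,0,0), (0,-1,1), (0,1,1), and let D = {(x,y) ∈ ℝ² : |x| + |y| ≤ 1}. Define F : D → Set ℝ by F(x,y) = {z ∈ ℝ : (x,y,z) ∈ S}. Then F is a convex multifunction with nonempty compact convex values, but F admits no affine selection: there is no affine map f : ℝ² → ℝ with f(p) ∈ F(p) for all p ∈ D. -/
/-!
The tetrahedron `S` is cut out by `|y| ≤ z` and `|x| ≤ 1 - z`, so
`F (x, y) = [|y|, 1 - |x|]`. Convexity of `F` is inherited from convexity of its graph `S`.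
An affine `f` would satisfy `f (1, 0) + f (-1, 0) = 2 f 0 = f (0, 1) + f (0, -1)`, whereas
`F` forces the left-hand side to be `0 + 0` and the right-hand side to be `1 + 1`.
-/

open Pointwise

noncomputable def olsenS : Set (Fin 3 → ℝ) :=
  convexHull ℝ {![(-1:ℝ), 0, 0], ![1, 0, 0], ![0, -1, 1], ![0, 1, 1]}

def olsenD : Set (Fin 2 → ℝ) := {p | |p 0| + |p 1| ≤ 1}

noncomputable def olsenF (p : Fin 2 → ℝ) : Set ℝ :=
  {z | ![p 0, p 1, z] ∈ olsenS}

section General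

variable {E V : Type*} [AddCommGroup E] [Module ℝ E] [AddCommGroup V] [Module ℝ V]

theorem convex_setOf_abs_le (f g : E →ᵃ[ℝ] ℝ) : Convex ℝ {x | |f x| ≤ g x} := by
  have h : {x | |f x| ≤ g x} = (-f - g) ⁻¹' Set.Iic 0 ∩ (f - g) ⁻¹' Set.Iic 0 := by
    ext x
    simp only [Set.mem_ofPred_eq, Set.mem_inter_iff, Set.mem_preimage, AffineMap.coe_sub,
      AffineMap.coe_neg, Pi.sub_apply, Pi.neg_apply, Set.mem_Iic, abs_le]
    constructor <;> rintro ⟨h₁, h₂⟩ <;> constructor <;> linarith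
  rw [h]
  exact ((convex_Iic 0).affine_preimage _).inter ((convex_Iic 0).affine_preimage _)

theorem Convex.smul_add_smul_slice_subset {S : Set V} (hS : Convex ℝ S)
    (φ : E × ℝ →ₗ[ℝ] V) {p q : E} {t : ℝ} (ht : t ∈ Set.Icc (0 : ℝ) 1) :
    t • {z | φ (p, z) ∈ S} + (1 - t) • {z | φ (q, z) ∈ S} ⊆
      {z | φ (t • p + (1 - t) • q, z) ∈ S} := by
  rintro _ ⟨_, ⟨u, hu, rfl⟩, _, ⟨v, hv, rfl⟩, rfl⟩
  have h := hS hu hv ht.1 (sub_nonneg.2 ht.2) (add_sub_cancel t 1)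
  rwa [← map_smul, ← map_smul, ← map_add, Prod.smul_mk, Prod.smul_mk, Prod.mk_add_mk] at h

end General

theorem AffineMap.apply_add_apply_neg {k E V : Type*} [Ring k] [AddCommGroup E] [Module k E]
    [AddCommGroup V] [Module k V]
    (f : E →ᵃ[k] V) (a : E) : f a + f (-a) = f 0 + f 0 := by
  rw [congrFun f.decomp a, congrFun f.decomp (-a)]
  simp only [Pi.add_apply, map_neg]
  abel

theorem mem_olsenS_of_abs_le {v : Fin 3 → ℝ} (h₁ : |v 1| ≤ v 2) (h₂ : |v 0| ≤ 1 - v 2) :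
    v ∈ olsenS := by
  obtain ⟨hx₁, hx₂⟩ := abs_le.1 h₂
  obtain ⟨hy₁, hy₂⟩ := abs_le.1 h₁
  let w : Fin 4 → ℝ :=
    ![(1 - v 2 - v 0) / 2, (1 - v 2 + v 0) / 2, (v 2 - v 1) / 2, (v 2 + v 1) / 2]
  let P : Fin 4 → Fin 3 → ℝ := ![![-1, 0, 0], ![1, 0, 0], ![0, -1, 1], ![0, 1, 1]]
  have hv : v = ∑ i, w i • P i := by
    ext j
    fin_cases j <;> simp [Fin.sum_univ_four, w, P] <;> ring
  rw [hv]
  refine (convex_convexHull ℝ _).sum_mem (fun i _ => ?_) ?_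
    (fun i _ => subset_convexHull ℝ _ ?_)
  · fin_cases i <;> simp [w] <;> linarith
  · simp [Fin.sum_univ_four, w]
    ring
  · fin_cases i <;> simp [P]

theorem olsenS_eq : olsenS = {v | |v 1| ≤ v 2 ∧ |v 0| ≤ 1 - v 2} := by
  refine subset_antisymm (convexHull_min ?_ ?_) fun v hv => mem_olsenS_of_abs_le hv.1 hv.2
  · rintro v (rfl | rfl | rfl | rfl) <;>
      norm_num [Matrix.cons_val_two, Matrix.tail_cons, Matrix.head_cons]
  · let π (i : Fin 3) : (Fin 3 → ℝ) →ᵃ[ℝ] ℝ := (LinearMap.proj i).toAffineMap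
    exact (convex_setOf_abs_le (π 1) (π 2)).inter
      (convex_setOf_abs_le (π 0) (AffineMap.const ℝ (Fin 3 → ℝ) (1 : ℝ) - π 2))

theorem olsenF_eq (p : Fin 2 → ℝ) : olsenF p = Set.Icc |p 1| (1 - |p 0|) := by
  ext z
  simp only [olsenF, olsenS_eq, Set.mem_ofPred_eq, Set.mem_Icc, Matrix.cons_val]
  constructor <;> rintro ⟨h₁, h₂⟩ <;> constructor <;> linarith

def sliceEmbedding : (Fin 2 → ℝ) × ℝ →ₗ[ℝ] Fin 3 → ℝ where
  toFun x := ![x.1 0, x.1 1, x.2]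
  map_add' x y := by ext i; fin_cases i <;> rfl
  map_smul' c x := by ext i; fin_cases i <;> rfl

theorem not_exists_affine_selection_olsenF :
    ¬ ∃ f : (Fin 2 → ℝ) →ᵃ[ℝ] ℝ, ∀ p ∈ olsenD, f p ∈ olsenF p := by
  rintro ⟨f, hf⟩
  have hx := f.apply_add_apply_neg ![1, 0]
  have hy := f.apply_add_apply_neg ![0, 1]
  have h₁ := hf ![1, 0] (by simp [olsenD])
  have h₂ := hf (-![1, 0]) (by simp [olsenD])
  have h₃ := hf ![0, 1] (by simp [olsenD])
  have h₄ := hf (-![0, 1]) (by simp [olsenD])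
  simp only [olsenF_eq] at h₁ h₂ h₃ h₄
  norm_num at hx hy h₁ h₂ h₃ h₄
  linarith

theorem stmt_19 :
    (∀ p ∈ olsenD, (olsenF p).Nonempty ∧ IsCompact (olsenF p) ∧
        Convex ℝ (olsenF p)) ∧
    (∀ p ∈ olsenD, ∀ q ∈ olsenD, ∀ t ∈ Set.Icc (0:ℝ) 1,
        t • olsenF p + (1 - t) • olsenF q ⊆ olsenF (t • p + (1 - t) • q)) ∧
    ¬ ∃ f : (Fin 2 → ℝ) →ᵃ[ℝ] ℝ, ∀ p ∈ olsenD, f p ∈ olsenF p := by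
  refine ⟨fun p hp => ?_, fun p _ q _ t ht => ?_, not_exists_affine_selection_olsenF⟩
  · rw [olsenF_eq]
    exact ⟨Set.nonempty_Icc.2 (by linarith [show |p 0| + |p 1| ≤ 1 from hp]),
      isCompact_Icc, convex_Icc _ _⟩
  · exact (convex_convexHull ℝ _).smul_add_smul_slice_subset sliceEmbedding ht
end
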